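/- Let w be a word in the free monoid on L, R, with associated matrix M(w) = [[a,b],[c,d]] ∈ SL₂(ℕ) (where L ↦ [[1,1],[0,1]], R ↦ [[1,0],[1,1]]) and associated sequence σ(w) = (s₁,…,s_m) ∈ 𝔖 (where L ↦ (2), R ↦ (1,2) under the composition law (s₁,…,s_m)∘(t₁,…,t_n) = (s₁,…,s_{m−1}, s_m−1+t₁, t₂,…,t_n)). Then the continued fraction [s₁,…,s_m] equals (a+b)/(c+d). -/

import Mathlib

open Matrix

/-- The generator `L = [[1,1],[0,1]]`. -/
def Lmat : Matrix (Fin 2) (Fin 2) ℤ := !![1, 1; 0, 1]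

/-- The generator `R = [[1,0],[1,1]]`. -/
def Rmat : Matrix (Fin 2) (Fin 2) ℤ := !![1, 0; 1, 1]

/-- The matrix associated to a word (`false ↦ L`, `true ↦ R`). -/
def wordToMat (w : List Bool) : Matrix (Fin 2) (Fin 2) ℤ :=
  (w.map (fun b => if b then Rmat else Lmat)).prod

/-- The composition law on sequences:
`(s₁,…,s_m) ∘ (t₁,…,t_n) = (s₁,…,s_{m−1}, s_m−1+t₁, t₂,…,t_n)`. -/
def compS (s t : List ℤ) : List ℤ :=
  if s = [] then t
  else if t = [] then s
  else s.dropLast ++ (s.getLast! - 1 + t.head!) :: t.tail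

/-- The sequence associated to a word, via `L ↦ (2)`, `R ↦ (1,2)`. -/
def wordToSeq (w : List Bool) : List ℤ :=
  (w.map (fun b => if b then [(1 : ℤ), 2] else [(2 : ℤ)])).foldr compS []

/-- The Hirzebruch–Jung continued fraction `[s₁,…,s_m] = s₁ − 1/(s₂ − 1/(⋯))`. -/
def hj : List ℤ → ℚ
  | [] => 0
  | s :: t => (s : ℚ) - 1 / hj t

/-! The row sums `(a + b, c + d)` of `M(w)` form the vector `M(w) *ᵥ 1`, and `(a + b)/(c + d)` is the
image of `1` under the Möbius action of `M(w)`. Prepending `L` to `w` maps the row sums `(p, q)` to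
`(p + q, q)`, i.e. acts on `x = p/q` by `x ↦ 1 + x`, and raises the first entry of the sequence by one; prepending `R` maps
them to `(p, p + q)`, i.e. `x ↦ 1 - 1/(1 + x)`, and moreover prepends the entry `1`. Both operations
change `[s₁,…,s_m]` in the same way, so induction on the word from the left gives the theorem; the row
sums stay positive, so no division by zero occurs. -/

lemma hj_cons (s : ℤ) (t : List ℤ) : hj (s :: t) = s - 1 / hj t := rfl

lemma hj_add_cons (x y : ℤ) (t : List ℤ) : hj ((x + y) :: t) = x + hj (y :: t) := by
  simp only [hj_cons]; push_cast; ring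

lemma compS_ne_nil {s : List ℤ} (hs : s ≠ []) (t : List ℤ) : compS s t ≠ [] := by
  unfold compS; split_ifs <;> simp_all

lemma compS_append_singleton_cons (s : List ℤ) (x h : ℤ) (t : List ℤ) :
    compS (s ++ [x]) (h :: t) = s ++ (x - 1 + h) :: t := by
  simp [compS]

lemma hj_compS_two_cons (h : ℤ) (t : List ℤ) : hj (compS [2] (h :: t)) = 1 + hj (h :: t) := by
  rw [← List.nil_append [2], compS_append_singleton_cons, List.nil_append,
    show (2 : ℤ) - 1 + h = 1 + h by ring, hj_add_cons, Int.cast_one]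

lemma hj_compS_one_two_cons (h : ℤ) (t : List ℤ) :
    hj (compS [1, 2] (h :: t)) = 1 - 1 / (1 + hj (h :: t)) := by
  rw [← List.singleton_append, compS_append_singleton_cons, List.singleton_append, hj_cons,
    show (2 : ℤ) - 1 + h = 1 + h by ring, hj_add_cons, Int.cast_one]

lemma wordToSeq_false_cons (w : List Bool) : wordToSeq (false :: w) = compS [2] (wordToSeq w) :=
  rfl

lemma wordToSeq_true_cons (w : List Bool) : wordToSeq (true :: w) = compS [1, 2] (wordToSeq w) :=
  rfl

lemma wordToSeq_cons_ne_nil (b : Bool) (w : List Bool) : wordToSeq (b :: w) ≠ [] := by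
  cases b <;> exact compS_ne_nil (List.cons_ne_nil _ _) _

lemma wordToMat_false_cons_mulVec (w : List Bool) (v : Fin 2 → ℤ) :
    wordToMat (false :: w) *ᵥ v =
      ![(wordToMat w *ᵥ v) 0 + (wordToMat w *ᵥ v) 1, (wordToMat w *ᵥ v) 1] := by
  rw [wordToMat, List.map_cons, List.prod_cons, ← mulVec_mulVec, ← wordToMat]
  ext i; fin_cases i <;> simp [Lmat, mulVec, dotProduct, Fin.sum_univ_two]

lemma wordToMat_true_cons_mulVec (w : List Bool) (v : Fin 2 → ℤ) :
    wordToMat (true :: w) *ᵥ v =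
      ![(wordToMat w *ᵥ v) 0, (wordToMat w *ᵥ v) 0 + (wordToMat w *ᵥ v) 1] := by
  rw [wordToMat, List.map_cons, List.prod_cons, ← mulVec_mulVec, ← wordToMat]
  ext i; fin_cases i <;> simp [Rmat, mulVec, dotProduct, Fin.sum_univ_two]

lemma wordToMat_mulVec_one_pos (w : List Bool) (i : Fin 2) : 0 < (wordToMat w *ᵥ 1) i := by
  induction w generalizing i with
  | nil => simp [wordToMat]
  | cons b w ih =>
    have := ih 0
    have := ih 1
    cases b
    · rw [wordToMat_false_cons_mulVec]
      fin_cases i <;> simp only [Fin.zero_eta, Fin.mk_one, cons_val_zero, cons_val_one] <;> omega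
    · rw [wordToMat_true_cons_mulVec]
      fin_cases i <;> simp only [Fin.zero_eta, Fin.mk_one, cons_val_zero, cons_val_one] <;> omega

theorem hj_wordToSeq_cons (b : Bool) (w : List Bool) :
    hj (wordToSeq (b :: w)) =
      ((wordToMat (b :: w) *ᵥ 1) 0 : ℚ) / ((wordToMat (b :: w) *ᵥ 1) 1 : ℚ) := by
  induction w generalizing b with
  | nil => cases b <;> simp [wordToSeq, compS, hj, wordToMat, Lmat, Rmat, mulVec, dotProduct]; norm_num
  | cons b' w ih =>
    obtain ⟨h, t, hseq⟩ := List.exists_cons_of_ne_nil (wordToSeq_cons_ne_nil b' w)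
    have hp := wordToMat_mulVec_one_pos (b' :: w) 0
    have hq := wordToMat_mulVec_one_pos (b' :: w) 1
    specialize ih b'
    rw [hseq] at ih
    cases b
    · rw [wordToSeq_false_cons, hseq, hj_compS_two_cons, ih, wordToMat_false_cons_mulVec]
      generalize wordToMat (b' :: w) *ᵥ 1 = v at *
      simp only [cons_val_zero, cons_val_one, Int.cast_add]
      rw [one_add_div (by positivity), add_comm]
    · rw [wordToSeq_true_cons, hseq, hj_compS_one_two_cons, ih, wordToMat_true_cons_mulVec]
      generalize wordToMat (b' :: w) *ᵥ 1 = v at *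
      simp only [cons_val_zero, cons_val_one, Int.cast_add]
      rw [one_add_div (by positivity), one_div_div, one_sub_div (by positivity),
        add_sub_cancel_left, add_comm]

/-- For a nonempty word `w` with associated matrix `[[a,b],[c,d]]` and associated
sequence `(s₁,…,s_m)`, the continued fraction `[s₁,…,s_m]` equals `(a+b)/(c+d)`. -/
theorem hj_wordToSeq_eq_frac (w : List Bool) (hw : w ≠ []) :
    hj (wordToSeq w) =
      ((wordToMat w 0 0 + wordToMat w 0 1 : ℤ) : ℚ) /
        ((wordToMat w 1 0 + wordToMat w 1 1 : ℤ) : ℚ) := by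
  obtain ⟨b, w, rfl⟩ := List.exists_cons_of_ne_nil hw
  simpa [mulVec, dotProduct, Fin.sum_univ_two] using hj_wordToSeq_cons b w
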